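/- Let n ≥ 1, d ≥ 2 and k ∈ {1,…,d−1} be integers and let p₁,…,pₙ ∈ ℝ^d. With the notation of Algorithm kSM-Approx — X* a minimizer of the relaxed problem, X* = Vᵀ D V a spectral decomposition with V orthogonal, ζ the indicator of a set of d−k smallest entries of q where q_j = ∑_{i=1}^n |(V pᵢ)_j|, E = Vᵀ diag(ζ) V, and S ⊆ ℝ^d the kernel of E (equivalently, the column space of (I_d − E)) — the subspace S is a k-dimensional linear subspace of ℝ^d and ∑_{i=1}^n dist(pᵢ, S) ≤ √d · ksm(P,k), where dist(p, S) = inf_{s ∈ S} ‖p − s‖₂. -/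

import Mathlib

/-!
Write `X* = Vᵀ diag(D) V`. The constraints `0 ⪯ X* ⪯ I` and `trace X* = d - k` say `0 ≤ D ≤ 1`
and `∑ D = d - k = |Ind|`, so, `Ind` collecting the `d - k` smallest `q_j`,
`∑_{j ∈ Ind} q_j ≤ ∑_j D_j q_j`. The left side is `∑ᵢ ‖diag(ζ) V pᵢ‖₁ ≥ ∑ᵢ ‖E pᵢ‖₂`, which bounds
`∑ᵢ dist(pᵢ, S)` because `pᵢ - E pᵢ ∈ S = ker E`. The right side is `∑ᵢ ‖D V pᵢ‖₁`, at most
`√d ∑ᵢ ‖D V pᵢ‖₂ = √d ∑ᵢ ‖X* pᵢ‖₂ ≤ √d ∑ᵢ yᵢ`. Finally every projection matrix of rank `d - k` is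
feasible for the relaxation, so `∑ᵢ yᵢ ≤ ksm(P,k)`.
-/

open Matrix

/-- The Euclidean (ℓ₂) norm of a vector in ℝ^d. -/
noncomputable def l2norm {d : ℕ} (u : Fin d → ℝ) : ℝ := Real.sqrt (∑ j, (u j) ^ 2)

/-- The Euclidean distance from a point `p` to a subset `S ⊆ ℝ^d`. -/
noncomputable def distToSet {d : ℕ} (p : Fin d → ℝ) (S : Set (Fin d → ℝ)) : ℝ :=
  sInf {r : ℝ | ∃ s ∈ S, r = l2norm (p - s)}

open Finset

section L2Norm

variable {d : ℕ}

lemma l2norm_nonneg (u : Fin d → ℝ) : 0 ≤ l2norm u := Real.sqrt_nonneg _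

lemma l2norm_eq_sqrt_dotProduct (u : Fin d → ℝ) : l2norm u = √(u ⬝ᵥ u) := by
  simp only [l2norm, dotProduct, sq]

lemma l2norm_le_sum_abs (u : Fin d → ℝ) : l2norm u ≤ ∑ j, |u j| := by
  rw [l2norm, Real.sqrt_le_left (sum_nonneg fun j _ => abs_nonneg _)]
  simpa only [sq_abs] using sum_sq_le_sq_sum_of_nonneg (fun j _ => abs_nonneg (u j))

lemma sum_abs_le_sqrt_mul_l2norm (u : Fin d → ℝ) : ∑ j, |u j| ≤ √d * l2norm u := by
  rw [l2norm, ← Real.sqrt_mul (Nat.cast_nonneg d),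
    Real.le_sqrt (sum_nonneg fun j _ => abs_nonneg _) (by positivity)]
  simpa [sq_abs] using sum_mul_sq_le_sq_mul_sq univ (fun _ => (1 : ℝ)) (fun j => |u j|)

lemma l2norm_mulVec_of_transpose_mul_self (A : Matrix (Fin d) (Fin d) ℝ) (hA : Aᵀ * A = 1)
    (u : Fin d → ℝ) : l2norm (A *ᵥ u) = l2norm u := by
  rw [l2norm_eq_sqrt_dotProduct, l2norm_eq_sqrt_dotProduct, dotProduct_mulVec, ← mulVec_transpose,
    mulVec_mulVec, hA, one_mulVec, dotProduct_comm]

lemma l2norm_conj_diagonal_mulVec (V : Matrix (Fin d) (Fin d) ℝ) (hV : V * Vᵀ = 1)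
    (w u : Fin d → ℝ) :
    l2norm ((Vᵀ * diagonal w * V) *ᵥ u) = l2norm (fun j => w j * (V *ᵥ u) j) := by
  rw [← mulVec_mulVec, ← mulVec_mulVec,
    l2norm_mulVec_of_transpose_mul_self Vᵀ (by rwa [transpose_transpose])]
  exact congrArg l2norm (funext fun j => mulVec_diagonal _ _ _)

end L2Norm

lemma distToSet_le_l2norm_sub {d : ℕ} {S : Set (Fin d → ℝ)} {s : Fin d → ℝ} (hs : s ∈ S)
    (p : Fin d → ℝ) : distToSet p S ≤ l2norm (p - s) :=
  csInf_le ⟨0, by rintro r ⟨s, -, rfl⟩; exact l2norm_nonneg _⟩ ⟨s, hs, rfl⟩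

lemma distToSet_ker_le_l2norm_mulVec {d : ℕ} {E : Matrix (Fin d) (Fin d) ℝ} (hE : E * E = E)
    (p : Fin d → ℝ) : distToSet p (LinearMap.ker E.mulVecLin) ≤ l2norm (E *ᵥ p) := by
  have hmem : p - E *ᵥ p ∈ LinearMap.ker E.mulVecLin := by
    rw [LinearMap.mem_ker, mulVecLin_apply, mulVec_sub, mulVec_mulVec, hE, sub_self]
  simpa only [sub_sub_cancel] using distToSet_le_l2norm_sub hmem p

section OrthogonalConjugation

variable {d : ℕ} {V : Matrix (Fin d) (Fin d) ℝ}

lemma mul_conj_diagonal_mul_transpose (hV : V * Vᵀ = 1) (w : Fin d → ℝ) :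
    V * (Vᵀ * diagonal w * V) * Vᵀ = diagonal w := by
  simp only [← Matrix.mul_assoc, hV, Matrix.one_mul]
  rw [Matrix.mul_assoc, hV, Matrix.mul_one]

lemma nonneg_of_posSemidef_conj_diagonal (hV : V * Vᵀ = 1) {w : Fin d → ℝ}
    (h : (Vᵀ * diagonal w * V).PosSemidef) (j : Fin d) : 0 ≤ w j := by
  have hw := h.mul_mul_conjTranspose_same V
  rw [conjTranspose_eq_transpose_of_trivial, mul_conj_diagonal_mul_transpose hV] at hw
  exact posSemidef_diagonal_iff.mp hw j

lemma one_sub_conj_diagonal (hV : Vᵀ * V = 1) (w : Fin d → ℝ) :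
    1 - Vᵀ * diagonal w * V = Vᵀ * diagonal (1 - w) * V := by
  have hdiag : diagonal (1 - w) = 1 - diagonal w := by
    rw [← diagonal_one', diagonal_sub]
    rfl
  rw [hdiag, Matrix.mul_sub, Matrix.sub_mul, Matrix.mul_one, hV]

lemma trace_conj_diagonal (hV : V * Vᵀ = 1) (w : Fin d → ℝ) :
    (Vᵀ * diagonal w * V).trace = ∑ j, w j := by
  rw [trace_mul_cycle, hV, Matrix.one_mul, trace_diagonal]

end OrthogonalConjugation

/-- The paper's `E`: for orthogonal `V`, the orthogonal projection onto the span of the rows of `V`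
indexed by `Ind`. -/
noncomputable def indicatorProjection {d : ℕ} (V : Matrix (Fin d) (Fin d) ℝ)
    (Ind : Finset (Fin d)) : Matrix (Fin d) (Fin d) ℝ :=
  Vᵀ * diagonal (fun j => if j ∈ Ind then 1 else 0) * V

section IndicatorProjection

variable {d : ℕ} {V : Matrix (Fin d) (Fin d) ℝ} (Ind : Finset (Fin d))

lemma indicatorProjection_mul_self (hV : V * Vᵀ = 1) :
    indicatorProjection V Ind * indicatorProjection V Ind = indicatorProjection V Ind := by
  have hsq : diagonal (fun j => if j ∈ Ind then (1 : ℝ) else 0) *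
      diagonal (fun j => if j ∈ Ind then 1 else 0) =
        diagonal (fun j => if j ∈ Ind then 1 else 0) := by
    rw [diagonal_mul_diagonal]
    congr 1
    ext j
    split_ifs <;> norm_num
  simp only [indicatorProjection, Matrix.mul_assoc]
  rw [← Matrix.mul_assoc V, hV, Matrix.one_mul, ← Matrix.mul_assoc _ _ V, hsq]

lemma indicatorProjection_transpose : (indicatorProjection V Ind)ᵀ = indicatorProjection V Ind := by
  rw [indicatorProjection, transpose_mul, transpose_mul, transpose_transpose, diagonal_transpose,
    Matrix.mul_assoc]

lemma rank_indicatorProjection (hV : Vᵀ * V = 1) : (indicatorProjection V Ind).rank = Ind.card := by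
  rw [indicatorProjection, rank_mul_eq_left_of_isUnit_det V _ (isUnit_det_of_left_inverse hV),
    rank_mul_eq_right_of_isUnit_det Vᵀ _ (isUnit_det_of_right_inverse hV), rank_diagonal,
    Fintype.card_subtype]
  congr 1
  ext j
  simp

lemma finrank_ker_indicatorProjection (hV : Vᵀ * V = 1) :
    Module.finrank ℝ (LinearMap.ker (indicatorProjection V Ind).mulVecLin) = d - Ind.card := by
  have h := LinearMap.finrank_range_add_finrank_ker (indicatorProjection V Ind).mulVecLin
  rw [Module.finrank_fintype_fun_eq_card, Fintype.card_fin] at h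
  have hrank :
      Module.finrank ℝ (LinearMap.range (indicatorProjection V Ind).mulVecLin) = Ind.card :=
    rank_indicatorProjection Ind hV
  omega

lemma l2norm_indicatorProjection_mulVec_le (hV : V * Vᵀ = 1) (u : Fin d → ℝ) :
    l2norm (indicatorProjection V Ind *ᵥ u) ≤ ∑ j ∈ Ind, |(V *ᵥ u) j| := by
  rw [indicatorProjection, l2norm_conj_diagonal_mulVec V hV]
  refine (l2norm_le_sum_abs _).trans_eq ?_
  simp only [ite_mul, one_mul, zero_mul, apply_ite abs, abs_zero]
  rw [sum_ite_mem, univ_inter]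

end IndicatorProjection

/-- With `t = max_{Ind} q`, the weight `∑_{Ind} (1 - w)` missing on `Ind` equals the weight
`∑_{Indᶜ} w` placed outside, and moving it costs at most `t` per unit on `Ind` and gains at least
`t` per unit outside. -/
lemma sum_le_sum_mul_of_forall_le_of_sum_eq_card {ι : Type*} [Fintype ι] {Ind : Finset ι}
    (hne : Ind.Nonempty) {q w : ι → ℝ} (hmin : ∀ j ∈ Ind, ∀ j' ∉ Ind, q j ≤ q j')
    (hw0 : ∀ j, 0 ≤ w j) (hw1 : ∀ j, w j ≤ 1) (hsum : ∑ j, w j = Ind.card) :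
    ∑ j ∈ Ind, q j ≤ ∑ j, w j * q j := by
  classical
  obtain ⟨j₀, hj₀, hmax⟩ := Ind.exists_max_image q hne
  have hmass : ∑ j ∈ Ind, (1 - w j) = ∑ j ∈ Indᶜ, w j := by
    rw [sum_sub_distrib, sum_const, nsmul_one]
    linarith [sum_add_sum_compl Ind w]
  have hdeficit : ∑ j ∈ Ind, (1 - w j) * q j ≤ ∑ j ∈ Indᶜ, w j * q j :=
    calc ∑ j ∈ Ind, (1 - w j) * q j
        ≤ ∑ j ∈ Ind, (1 - w j) * q j₀ :=
          sum_le_sum fun j hj => mul_le_mul_of_nonneg_left (hmax j hj) (sub_nonneg.2 (hw1 j))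
      _ = ∑ j ∈ Indᶜ, w j * q j₀ := by rw [← sum_mul, ← sum_mul, hmass]
      _ ≤ ∑ j ∈ Indᶜ, w j * q j :=
          sum_le_sum fun j hj => mul_le_mul_of_nonneg_left (hmin j₀ hj₀ j (mem_compl.1 hj)) (hw0 j)
  have hsplit : ∑ j ∈ Ind, q j = ∑ j ∈ Ind, w j * q j + ∑ j ∈ Ind, (1 - w j) * q j := by
    rw [← sum_add_distrib]
    exact sum_congr rfl fun j _ => by ring
  linarith [sum_add_sum_compl Ind fun j => w j * q j]

lemma sum_mul_sum_abs_le_sqrt_mul_sum_l2norm {n d : ℕ} {w : Fin d → ℝ} (hw : ∀ j, 0 ≤ w j)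
    (v : Fin n → Fin d → ℝ) :
    ∑ j, w j * ∑ i, |v i j| ≤ √d * ∑ i, l2norm (fun j => w j * v i j) :=
  calc ∑ j, w j * ∑ i, |v i j| = ∑ i, ∑ j, |w j * v i j| := by
        rw [sum_comm]
        simp only [mul_sum, abs_mul, abs_of_nonneg (hw _)]
    _ ≤ √d * ∑ i, l2norm (fun j => w j * v i j) := by
        rw [mul_sum]
        exact sum_le_sum fun i _ => sum_abs_le_sqrt_mul_l2norm _

lemma trace_eq_rank_of_mul_self_eq {ι K : Type*} [Fintype ι] [DecidableEq ι] [Field K]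
    {X : Matrix ι ι K} (hX : X * X = X) : X.trace = X.rank := by
  have hidem : IsIdempotentElem X.mulVecLin := by
    rw [IsIdempotentElem, Module.End.mul_eq_comp, ← mulVecLin_mul, hX]
  rw [← trace_toLin'_eq, toLin'_apply', (LinearMap.IsIdempotentElem.isProj_range _ hidem).trace]
  rfl

lemma posSemidef_of_transpose_eq_of_mul_self_eq {ι : Type*} [Fintype ι] {X : Matrix ι ι ℝ}
    (hT : Xᵀ = X) (hX : X * X = X) : X.PosSemidef := by
  have hX' : X = Xᴴ * X := by rw [conjTranspose_eq_transpose_of_trivial, hT, hX]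
  rw [hX']
  exact posSemidef_conjTranspose_mul_self X

section Relaxation

variable {n d : ℕ} (p : Fin n → Fin d → ℝ) (k : ℕ)

/-- `ksm(P,k)` is the infimum of this set. -/
def ksmValues : Set ℝ :=
  {r : ℝ | ∃ X : Matrix (Fin d) (Fin d) ℝ,
    X * X = X ∧ Xᵀ = X ∧ X.rank = d - k ∧ r = ∑ i, l2norm (X.mulVec (p i))}

def relaxedValues : Set ℝ :=
  {r : ℝ | ∃ (X : Matrix (Fin d) (Fin d) ℝ) (y : Fin n → ℝ),
    Xᵀ = X ∧ X.trace = ((d - k : ℕ) : ℝ) ∧ X.PosSemidef ∧ (1 - X).PosSemidef ∧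
    (∀ i, l2norm (X.mulVec (p i)) ≤ y i) ∧ r = ∑ i, y i}

lemma ksmValues_subset_relaxedValues : ksmValues p k ⊆ relaxedValues p k := by
  rintro r ⟨X, hXX, hXT, hXr, rfl⟩
  have hYY : (1 - X) * (1 - X) = 1 - X := by
    rw [Matrix.sub_mul, Matrix.one_mul, Matrix.mul_sub, Matrix.mul_one, hXX, sub_self, sub_zero]
  have hYT : (1 - X)ᵀ = 1 - X := by rw [transpose_sub, transpose_one, hXT]
  exact ⟨X, fun i => l2norm (X *ᵥ p i), hXT, by rw [trace_eq_rank_of_mul_self_eq hXX, hXr],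
    posSemidef_of_transpose_eq_of_mul_self_eq hXT hXX,
    posSemidef_of_transpose_eq_of_mul_self_eq hYT hYY, fun i => le_rfl, rfl⟩

lemma sInf_relaxedValues_le_sInf_ksmValues (h : (ksmValues p k).Nonempty) :
    sInf (relaxedValues p k) ≤ sInf (ksmValues p k) := by
  refine csInf_le_csInf ⟨0, ?_⟩ h (ksmValues_subset_relaxedValues p k)
  rintro r ⟨X, y, -, -, -, -, hy, rfl⟩
  exact sum_nonneg fun i _ => (l2norm_nonneg _).trans (hy i)

end Relaxation

theorem stmt_8_general (n d k : ℕ) (hk1 : 1 ≤ k) (hk2 : k ≤ d - 1)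
    (p : Fin n → Fin d → ℝ)
    (Xstar : Matrix (Fin d) (Fin d) ℝ) (ystar : Fin n → ℝ)
    (htr : Xstar.trace = ((d - k : ℕ) : ℝ))
    (hpsd : Xstar.PosSemidef) (hpsd' : (1 - Xstar).PosSemidef)
    (hy : ∀ i, l2norm (Xstar.mulVec (p i)) ≤ ystar i)
    (hopt : ∑ i, ystar i
      = sInf {r : ℝ | ∃ (X : Matrix (Fin d) (Fin d) ℝ) (y : Fin n → ℝ),
          Xᵀ = X ∧ X.trace = ((d - k : ℕ) : ℝ) ∧ X.PosSemidef ∧ (1 - X).PosSemidef ∧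
          (∀ i, l2norm (X.mulVec (p i)) ≤ y i) ∧ r = ∑ i, y i})
    (V : Matrix (Fin d) (Fin d) ℝ) (hV : Vᵀ * V = 1)
    (Dvec : Fin d → ℝ) (hdecomp : Xstar = Vᵀ * Matrix.diagonal Dvec * V)
    (q : Fin d → ℝ) (hq : ∀ j, q j = ∑ i, |V.mulVec (p i) j|)
    (Ind : Finset (Fin d)) (hcard : Ind.card = d - k)
    (hmin : ∀ j ∈ Ind, ∀ j' ∉ Ind, q j ≤ q j')
    (ζ : Fin d → ℝ) (hζ : ∀ j : Fin d, ζ j = if j ∈ Ind then 1 else 0)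
    (E : Matrix (Fin d) (Fin d) ℝ) (hE : E = Vᵀ * Matrix.diagonal ζ * V)
    (S : Submodule ℝ (Fin d → ℝ)) (hS : S = LinearMap.ker E.mulVecLin) :
    Module.finrank ℝ S = k ∧
    ∑ i, distToSet (p i) (S : Set (Fin d → ℝ))
      ≤ Real.sqrt d * sInf {r : ℝ | ∃ X : Matrix (Fin d) (Fin d) ℝ,
          X * X = X ∧ Xᵀ = X ∧ X.rank = d - k ∧ r = ∑ i, l2norm (X.mulVec (p i))} := by
  obtain rfl : E = indicatorProjection V Ind := by rw [hE, funext hζ, indicatorProjection]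
  subst hS hdecomp
  replace hopt : ∑ i, ystar i = sInf (relaxedValues p k) := hopt
  have hV' : V * Vᵀ = 1 := mul_eq_one_comm.mp hV
  have hD0 : ∀ j, 0 ≤ Dvec j := nonneg_of_posSemidef_conj_diagonal hV' hpsd
  have hD1 : ∀ j, Dvec j ≤ 1 := fun j => sub_nonneg.mp
    (nonneg_of_posSemidef_conj_diagonal hV' (one_sub_conj_diagonal hV Dvec ▸ hpsd') j)
  have hDsum : ∑ j, Dvec j = Ind.card := by rw [← trace_conj_diagonal hV', htr, hcard]
  refine ⟨by rw [finrank_ker_indicatorProjection Ind hV, hcard]; omega, ?_⟩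
  calc ∑ i, distToSet (p i) (LinearMap.ker (indicatorProjection V Ind).mulVecLin)
      ≤ ∑ i, ∑ j ∈ Ind, |(V *ᵥ p i) j| := sum_le_sum fun i _ =>
        (distToSet_ker_le_l2norm_mulVec (indicatorProjection_mul_self Ind hV') (p i)).trans
          (l2norm_indicatorProjection_mulVec_le Ind hV' (p i))
    _ = ∑ j ∈ Ind, q j := by rw [sum_comm]; simp only [hq]
    _ ≤ ∑ j, Dvec j * q j := sum_le_sum_mul_of_forall_le_of_sum_eq_card
        (card_pos.mp (by omega)) hmin hD0 hD1 hDsum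
    _ ≤ √d * ∑ i, l2norm ((Vᵀ * diagonal Dvec * V) *ᵥ p i) := by
        simp only [hq, l2norm_conj_diagonal_mulVec V hV']
        exact sum_mul_sum_abs_le_sqrt_mul_sum_l2norm hD0 _
    _ ≤ √d * sInf (relaxedValues p k) := by rw [← hopt]; gcongr with i; exact hy i
    _ ≤ √d * sInf (ksmValues p k) := mul_le_mul_of_nonneg_left
        (sInf_relaxedValues_le_sInf_ksmValues p k ⟨_, _, indicatorProjection_mul_self Ind hV',
          indicatorProjection_transpose Ind, by rw [rank_indicatorProjection Ind hV, hcard], rfl⟩)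
        (Real.sqrt_nonneg d)

/-- With the notation of Algorithm kSM-Approx (`X*` a minimizer of the
relaxed problem, `X* = Vᵀ D V` a spectral decomposition with `V` orthogonal, `ζ` the
indicator of a set of `d - k` smallest entries of `q` where `qⱼ = ∑ᵢ |(V pᵢ)ⱼ|`,
`E = Vᵀ diag(ζ) V`, and `S` the kernel of `E`), the subspace `S` is a `k`-dimensional
linear subspace of ℝ^d and `∑ᵢ dist(pᵢ, S) ≤ √d · ksm(P,k)`. -/
theorem stmt_8 (n d k : ℕ) (hn : 1 ≤ n) (hd : 2 ≤ d) (hk1 : 1 ≤ k) (hk2 : k ≤ d - 1)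
    (p : Fin n → Fin d → ℝ)
    (Xstar : Matrix (Fin d) (Fin d) ℝ) (ystar : Fin n → ℝ)
    (hsym : Xstarᵀ = Xstar) (htr : Xstar.trace = ((d - k : ℕ) : ℝ))
    (hpsd : Xstar.PosSemidef) (hpsd' : (1 - Xstar).PosSemidef)
    (hy : ∀ i, l2norm (Xstar.mulVec (p i)) ≤ ystar i)
    (hopt : ∑ i, ystar i
      = sInf {r : ℝ | ∃ (X : Matrix (Fin d) (Fin d) ℝ) (y : Fin n → ℝ),
          Xᵀ = X ∧ X.trace = ((d - k : ℕ) : ℝ) ∧ X.PosSemidef ∧ (1 - X).PosSemidef ∧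
          (∀ i, l2norm (X.mulVec (p i)) ≤ y i) ∧ r = ∑ i, y i})
    (V : Matrix (Fin d) (Fin d) ℝ) (hV : Vᵀ * V = 1)
    (Dvec : Fin d → ℝ) (hdecomp : Xstar = Vᵀ * Matrix.diagonal Dvec * V)
    (q : Fin d → ℝ) (hq : ∀ j, q j = ∑ i, |V.mulVec (p i) j|)
    (Ind : Finset (Fin d)) (hcard : Ind.card = d - k)
    (hmin : ∀ j ∈ Ind, ∀ j' ∉ Ind, q j ≤ q j')
    (ζ : Fin d → ℝ) (hζ : ∀ j : Fin d, ζ j = if j ∈ Ind then 1 else 0)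
    (E : Matrix (Fin d) (Fin d) ℝ) (hE : E = Vᵀ * Matrix.diagonal ζ * V)
    (S : Submodule ℝ (Fin d → ℝ)) (hS : S = LinearMap.ker E.mulVecLin) :
    Module.finrank ℝ S = k ∧
    ∑ i, distToSet (p i) (S : Set (Fin d → ℝ))
      ≤ Real.sqrt d * sInf {r : ℝ | ∃ X : Matrix (Fin d) (Fin d) ℝ,
          X * X = X ∧ Xᵀ = X ∧ X.rank = d - k ∧ r = ∑ i, l2norm (X.mulVec (p i))} :=
  stmt_8_general n d k hk1 hk2 p Xstar ystar htr hpsd hpsd' hy hopt V hV Dvec hdecomp q hq Ind hcard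
    hmin ζ hζ E hE S hS
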